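/- Let n ≥ 2 and let ψ be an n-qubit singlet product, i.e., the tensor product over the pairs of a perfect matching of the qubits of the two-qubit vectors |00⟩ + |11⟩ (times a nonzero single-qubit vector in the leftover qubit when n is odd). Then the column collection M of ψ attains the minimum rank: rank_ℝ M = 3n/2 + 1 if n is even, and rank_ℝ M = (3n+1)/2 + 1 if n is odd. -/

import Mathlib

/-- An `n`-qubit state vector, identified with its coefficient function. -/
abbrev QState (n : ℕ) := (Fin n → Fin 2) → ℂ

/-- Complement the `k`-th bit of a multi-index. -/
def flipBit {n : ℕ} (k : Fin n) (I : Fin n → Fin 2) : Fin n → Fin 2 :=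
  Function.update I k (1 - I k)

/-- `(A_k ψ)(I) = i (−1)^{i_k} c_I`. -/
def Aop {n : ℕ} (k : Fin n) (ψ : QState n) : QState n :=
  fun I => Complex.I * (-1 : ℂ) ^ ((I k : ℕ)) * ψ I

/-- `(B_k ψ)(I) = (−1)^{i_k} c_{I_k}`. -/
def Bop {n : ℕ} (k : Fin n) (ψ : QState n) : QState n :=
  fun I => (-1 : ℂ) ^ ((I k : ℕ)) * ψ (flipBit k I)

/-- `(C_k ψ)(I) = i c_{I_k}`. -/
def Cop {n : ℕ} (k : Fin n) (ψ : QState n) : QState n :=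
  fun I => Complex.I * ψ (flipBit k I)

/-- The triple `T_k = {A_k ψ, B_k ψ, C_k ψ}`. -/
def triple {n : ℕ} (k : Fin n) (ψ : QState n) : Set (QState n) :=
  {Aop k ψ, Bop k ψ, Cop k ψ}

/-- Real inner product: the real part of the Hermitian inner product. -/
def rdot {n : ℕ} (φ ψ : QState n) : ℝ :=
  ∑ I : Fin n → Fin 2, ((starRingEnd ℂ) (φ I) * ψ I).re

/-- Real dimension of the span of a set of vectors. -/
noncomputable def rdim {n : ℕ} (S : Set (QState n)) : ℕ :=
  Module.finrank ℝ (Submodule.span ℝ S)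

/-- The set of columns of the matrix `M` associated to `ψ`. -/
def columns {n : ℕ} (ψ : QState n) : Set (QState n) :=
  (⋃ k : Fin n, triple k ψ) ∪ {(-Complex.I) • ψ}

/-- `rank_ℝ M`: the real dimension of the span of the columns of `M`. -/
noncomputable def rankM {n : ℕ} (ψ : QState n) : ℕ := rdim (columns ψ)

/-- The action of `(U_1, …, U_n) ∈ SU(2)^n` on an `n`-qubit state,
`U_1 ⊗ ⋯ ⊗ U_n`. -/
noncomputable def actLU {n : ℕ} (U : ∀ _ : Fin n, Matrix.specialUnitaryGroup (Fin 2) ℂ)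
    (ψ : QState n) : QState n :=
  fun I => ∑ J : Fin n → Fin 2, (∏ k : Fin n, (U k : Matrix (Fin 2) (Fin 2) ℂ) (I k) (J k)) * ψ J

/-- Local unitary equivalence of two state vectors. -/
def LUEquiv {n : ℕ} (ψ ψ' : QState n) : Prop :=
  ∃ U : ∀ _ : Fin n, Matrix.specialUnitaryGroup (Fin 2) ℂ, actLU U ψ = ψ'

/-- Tensor product of coefficient functions. -/
def tensorState {n₁ n₂ : ℕ} (ψ₁ : QState n₁) (ψ₂ : QState n₂) : QState (n₁ + n₂) :=
  fun I => ψ₁ (fun k => I (Fin.castAdd n₂ k)) * ψ₂ (fun k => I (Fin.natAdd n₁ k))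

/-- A perfect matching of the `n` qubits, encoded as an involution with no fixed
point when `n` is even and exactly one fixed point (the leftover qubit) when `n`
is odd. -/
def IsMatching {n : ℕ} (m : Fin n → Fin n) : Prop :=
  Function.Involutive m ∧ (Finset.univ.filter fun k => m k = k).card = n % 2

/-- The singlet product for a matching `m`: the tensor product over matched pairs
of `|00⟩ + |11⟩`, times the single-qubit vector `χ` in the leftover qubit when `n`
is odd. -/
def singletProduct {n : ℕ} (m : Fin n → Fin n) (χ : Fin 2 → ℂ) : QState n :=
  fun I => (∏ k : Fin n, if I k = I (m k) then (1 : ℂ) else 0) *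
    ∏ k ∈ Finset.univ.filter (fun k => m k = k), χ (I k)

/-- The minimum possible rank of `M`: `3n/2 + 1` for even `n`, `(3n+1)/2 + 1` for odd `n`. -/
def minRank (n : ℕ) : ℕ := if Even n then 3 * n / 2 + 1 else (3 * n + 1) / 2 + 1
namespace SingletAux
open Finset Complex

variable {n : ℕ}

lemma fin2_cases (x : Fin 2) : x = 0 ∨ x = 1 := by revert x; decide
lemma fin2_sub_sub (x : Fin 2) : 1 - (1 - x) = x := by revert x; decide
lemma fin2_sub_ne (x : Fin 2) : 1 - x ≠ x := by revert x; decide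
lemma fin2_sub_inj {x y : Fin 2} : 1 - x = 1 - y ↔ x = y := by revert x y; decide

lemma flipBit_same (k : Fin n) (I : Fin n → Fin 2) : flipBit k I k = 1 - I k :=
  Function.update_self ..

lemma flipBit_other {k j : Fin n} (h : j ≠ k) (I : Fin n → Fin 2) : flipBit k I j = I j :=
  Function.update_of_ne h ..

lemma flipBit_flipBit (k : Fin n) (I : Fin n → Fin 2) : flipBit k (flipBit k I) = I := by
  funext j
  by_cases h : j = k
  · subst h; rw [flipBit_same, flipBit_same, fin2_sub_sub]
  · rw [flipBit_other h, flipBit_other h]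

lemma flipBit_comm {k l : Fin n} (h : k ≠ l) (I : Fin n → Fin 2) :
    flipBit k (flipBit l I) = flipBit l (flipBit k I) := by
  funext j
  by_cases hj : j = k
  · subst hj; rw [flipBit_same, flipBit_other h, flipBit_other h, flipBit_same]
  · by_cases hj2 : j = l
    · subst hj2
      rw [flipBit_other hj, flipBit_same, flipBit_same, flipBit_other hj]
    · rw [flipBit_other hj, flipBit_other hj2, flipBit_other hj2, flipBit_other hj]

/-- single-bit flip as a permutation -/
def flipPerm (k : Fin n) : Equiv.Perm (Fin n → Fin 2) :=
  Function.Involutive.toPerm (flipBit k) (flipBit_flipBit k)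

@[simp] lemma flipPerm_apply (k : Fin n) (I : Fin n → Fin 2) : flipPerm k I = flipBit k I := rfl

/-- flip of a whole pair {m k, k} as a permutation -/
def pairPerm (m : Fin n → Fin n) (k : Fin n) : Equiv.Perm (Fin n → Fin 2) :=
  (flipPerm (m k)).trans (flipPerm k)

lemma pairPerm_apply (m : Fin n → Fin n) (k : Fin n) (I : Fin n → Fin 2) :
    pairPerm m k I = flipBit k (flipBit (m k) I) := rfl

lemma pairPerm_val (m : Fin n → Fin n) {k : Fin n} (hk : m k ≠ k) (I : Fin n → Fin 2)
    (j : Fin n) : pairPerm m k I j =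
      if j = k then 1 - I k else if j = m k then 1 - I (m k) else I j := by
  rw [pairPerm_apply]
  by_cases h1 : j = k
  · subst h1; rw [if_pos rfl, flipBit_same, flipBit_other (Ne.symm hk)]
  · rw [if_neg h1]
    by_cases h2 : j = m k
    · subst h2; rw [if_pos rfl, flipBit_other h1, flipBit_same]
    · rw [if_neg h2, flipBit_other h1, flipBit_other h2]

lemma sum_eq_zero_of_anti {α : Type*} [Fintype α] (e : Equiv.Perm α) (f : α → ℝ)
    (h : ∀ x, f (e x) = -f x) : ∑ x, f x = 0 := by
  have h1 := Equiv.sum_comp e f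
  rw [Finset.sum_congr rfl (fun x _ => h x), Finset.sum_neg_distrib] at h1
  linarith

variable {m : Fin n → Fin n} {χ : Fin 2 → ℂ}

lemma sp_support {I : Fin n → Fin 2} (h : singletProduct m χ I ≠ 0) (k : Fin n) :
    I k = I (m k) := by
  by_contra hne
  refine h ?_
  unfold singletProduct
  apply mul_eq_zero_of_left
  exact Finset.prod_eq_zero (Finset.mem_univ k) (if_neg hne)

lemma sp_pairPerm (hinv : Function.Involutive m) {k : Fin n} (hk : m k ≠ k)
    (I : Fin n → Fin 2) : singletProduct m χ (pairPerm m k I) = singletProduct m χ I := by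
  unfold singletProduct
  congr 1
  · refine Finset.prod_congr rfl fun j _ => ?_
    have key : (pairPerm m k I j = pairPerm m k I (m j)) ↔ (I j = I (m j)) := by
      by_cases h1 : j = k
      · subst h1
        rw [pairPerm_val m hk _ j, pairPerm_val m hk _ (m j), if_pos rfl, if_neg hk, if_pos rfl]
        exact fin2_sub_inj
      · by_cases h2 : j = m k
        · subst h2
          have hmj : m (m k) = k := hinv k
          rw [pairPerm_val m hk _ (m k), pairPerm_val m hk _ (m (m k)), if_neg h1, if_pos rfl,
            hmj, if_pos rfl]
          constructor
          · intro h; exact (fin2_sub_inj.mp h.symm).symm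
          · intro h; exact (fin2_sub_inj.mpr h.symm).symm
        · have h3 : m j ≠ k := fun h => h2 (by have := congrArg m h; rwa [hinv j] at this)
          have h4 : m j ≠ m k :=
            fun h => h1 (by have := congrArg m h; rwa [hinv j, hinv k] at this)
          rw [pairPerm_val m hk _ j, pairPerm_val m hk _ (m j), if_neg h1, if_neg h2,
            if_neg h3, if_neg h4]
    by_cases hc : I j = I (m j)
    · rw [if_pos hc, if_pos (key.mpr hc)]
    · rw [if_neg hc, if_neg (fun h => hc (key.mp h))]
  · refine Finset.prod_congr rfl fun j hj => ?_
    have hjf : m j = j := (Finset.mem_filter.mp hj).2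
    have h1 : j ≠ k := fun h => hk (by rw [← h, hjf])
    have h2 : j ≠ m k := fun h => hk (by rw [h] at hjf; rw [hinv k] at hjf; exact hjf.symm)
    rw [pairPerm_val m hk _ j, if_neg h1, if_neg h2]

lemma sp_mul_flip_eq_zero {k : Fin n} (hk : m k ≠ k) {I J : Fin n → Fin 2}
    (h1 : J k = I k) (h2 : J (m k) = I (m k)) :
    singletProduct m χ (flipBit k I) * singletProduct m χ J = 0 := by
  rcases eq_or_ne (singletProduct m χ (flipBit k I)) 0 with h | h
  · rw [h, zero_mul]
  rcases eq_or_ne (singletProduct m χ J) 0 with h' | h'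
  · rw [h', mul_zero]
  exfalso
  have e1 := sp_support h k
  rw [flipBit_same, flipBit_other hk] at e1
  have e2 := sp_support h' k
  rw [h1, h2] at e2
  exact fin2_sub_ne (I k) (by rw [e1, ← e2])

lemma sp_flip_eq (hinv : Function.Involutive m) {k : Fin n} (hk : m k ≠ k)
    (I : Fin n → Fin 2) :
    singletProduct m χ (flipBit k I) = singletProduct m χ (flipBit (m k) I) := by
  have := sp_pairPerm (χ := χ) hinv hk (flipBit (m k) I)
  rwa [pairPerm_apply, flipBit_flipBit] at this

end SingletAux

namespace SingletAux
open Finset Complex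

variable {n : ℕ}

@[simp] lemma fin2_one_sub_zero : (1 - 0 : Fin 2) = 1 := rfl
@[simp] lemma fin2_one_sub_one : (1 - 1 : Fin 2) = 0 := rfl

lemma rdot_comm (φ ψ : QState n) : rdot φ ψ = rdot ψ φ := by
  unfold rdot
  refine Finset.sum_congr rfl fun I _ => ?_
  simp only [Complex.mul_re, Complex.conj_re, Complex.conj_im]
  ring

lemma rdot_zero_right (φ : QState n) : rdot φ 0 = 0 := by simp [rdot]

lemma rdot_sum_smul (φ : QState n) {ι : Type*} [Fintype ι] (g : ι → ℝ) (v : ι → QState n) :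
    rdot φ (∑ j, g j • v j) = ∑ j, g j * rdot φ (v j) := by
  unfold rdot
  have key : ∀ I, ((starRingEnd ℂ) (φ I) * (∑ j, g j • v j) I).re
      = ∑ j, g j * ((starRingEnd ℂ) (φ I) * v j I).re := by
    intro I
    rw [Finset.sum_apply, Finset.mul_sum, Complex.re_sum]
    refine Finset.sum_congr rfl fun j _ => ?_
    rw [Pi.smul_apply, Complex.real_smul, ← mul_assoc,
      mul_comm ((starRingEnd ℂ) (φ I)) ((g j : ℝ) : ℂ), mul_assoc, Complex.re_ofReal_mul]
  rw [Finset.sum_congr rfl (fun I _ => key I), Finset.sum_comm]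
  exact Finset.sum_congr rfl fun j _ => (Finset.mul_sum _ _ _).symm

lemma li_of_ortho {ι : Type*} [Fintype ι] (v : ι → QState n)
    (hd : ∀ i, rdot (v i) (v i) ≠ 0) (ho : ∀ i j, i ≠ j → rdot (v i) (v j) = 0) :
    LinearIndependent ℝ v := by
  rw [Fintype.linearIndependent_iff]
  intro g hg i
  have key := rdot_sum_smul (v i) g v
  rw [hg, rdot_zero_right] at key
  rw [Finset.sum_eq_single i (fun j _ hj => by rw [ho i j (Ne.symm hj), mul_zero])
    (fun h => absurd (Finset.mem_univ i) h)] at key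
  rcases mul_eq_zero.mp key.symm with h | h
  · exact h
  · exact absurd h (hd i)

end SingletAux

namespace SingletAux
open Finset Complex

variable {n : ℕ}

lemma rdot_AB (ψ : QState n) (k : Fin n) : rdot (Aop k ψ) (Bop k ψ) = 0 := by
  unfold rdot
  apply sum_eq_zero_of_anti (flipPerm k)
  intro I
  simp only [flipPerm_apply, Aop, Bop, flipBit_same, flipBit_flipBit]
  rcases fin2_cases (I k) with h | h <;> rw [h] <;>
    simp only [fin2_one_sub_zero, fin2_one_sub_one, Fin.val_zero, Fin.val_one, pow_zero,
      pow_one] <;>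
    simp only [map_mul, Complex.mul_re, Complex.mul_im, Complex.conj_re, Complex.conj_im,
      Complex.I_re, Complex.I_im, Complex.neg_re, Complex.neg_im, Complex.one_re,
      Complex.one_im] <;> ring

lemma rdot_AC (ψ : QState n) (k : Fin n) : rdot (Aop k ψ) (Cop k ψ) = 0 := by
  unfold rdot
  apply sum_eq_zero_of_anti (flipPerm k)
  intro I
  simp only [flipPerm_apply, Aop, Cop, flipBit_same, flipBit_flipBit]
  rcases fin2_cases (I k) with h | h <;> rw [h] <;>
    simp only [fin2_one_sub_zero, fin2_one_sub_one, Fin.val_zero, Fin.val_one, pow_zero,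
      pow_one] <;>
    simp only [map_mul, Complex.mul_re, Complex.mul_im, Complex.conj_re, Complex.conj_im,
      Complex.I_re, Complex.I_im, Complex.neg_re, Complex.neg_im, Complex.one_re,
      Complex.one_im] <;> ring

lemma rdot_BC (ψ : QState n) (k : Fin n) : rdot (Bop k ψ) (Cop k ψ) = 0 := by
  unfold rdot
  apply Finset.sum_eq_zero
  intro I _
  simp only [Bop, Cop]
  rcases fin2_cases (I k) with h | h <;> rw [h] <;>
    simp only [fin2_one_sub_zero, fin2_one_sub_one, Fin.val_zero, Fin.val_one, pow_zero,
      pow_one] <;>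
    simp only [map_mul, Complex.mul_re, Complex.mul_im, Complex.conj_re, Complex.conj_im,
      Complex.I_re, Complex.I_im, Complex.neg_re, Complex.neg_im, Complex.one_re,
      Complex.one_im] <;> ring

lemma rdot_AA (ψ : QState n) (k : Fin n) : rdot (Aop k ψ) (Aop k ψ) = rdot ψ ψ := by
  unfold rdot
  refine Finset.sum_congr rfl fun I _ => ?_
  simp only [Aop]
  rcases fin2_cases (I k) with h | h <;> rw [h] <;>
    simp only [fin2_one_sub_zero, fin2_one_sub_one, Fin.val_zero, Fin.val_one, pow_zero,
      pow_one] <;>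
    simp only [map_mul, Complex.mul_re, Complex.mul_im, Complex.conj_re, Complex.conj_im,
      Complex.I_re, Complex.I_im, Complex.neg_re, Complex.neg_im, Complex.one_re,
      Complex.one_im] <;> ring

lemma rdot_BB (ψ : QState n) (k : Fin n) : rdot (Bop k ψ) (Bop k ψ) = rdot ψ ψ := by
  unfold rdot
  rw [← Equiv.sum_comp (flipPerm k) (fun I => ((starRingEnd ℂ) (ψ I) * ψ I).re)]
  refine Finset.sum_congr rfl fun I _ => ?_
  simp only [Bop, flipPerm_apply]
  rcases fin2_cases (I k) with h | h <;> rw [h] <;>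
    simp only [fin2_one_sub_zero, fin2_one_sub_one, Fin.val_zero, Fin.val_one, pow_zero,
      pow_one] <;>
    simp only [map_mul, Complex.mul_re, Complex.mul_im, Complex.conj_re, Complex.conj_im,
      Complex.I_re, Complex.I_im, Complex.neg_re, Complex.neg_im, Complex.one_re,
      Complex.one_im] <;> ring

lemma rdot_CC (ψ : QState n) (k : Fin n) : rdot (Cop k ψ) (Cop k ψ) = rdot ψ ψ := by
  unfold rdot
  rw [← Equiv.sum_comp (flipPerm k) (fun I => ((starRingEnd ℂ) (ψ I) * ψ I).re)]
  refine Finset.sum_congr rfl fun I _ => ?_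
  simp only [Cop, flipPerm_apply]
  simp only [map_mul, Complex.mul_re, Complex.mul_im, Complex.conj_re, Complex.conj_im,
    Complex.I_re, Complex.I_im] <;> ring

lemma rdot_DD (ψ : QState n) : rdot ((-Complex.I) • ψ) ((-Complex.I) • ψ) = rdot ψ ψ := by
  unfold rdot
  refine Finset.sum_congr rfl fun I _ => ?_
  simp only [Pi.smul_apply, smul_eq_mul, map_mul, Complex.mul_re, Complex.mul_im,
    Complex.conj_re, Complex.conj_im, Complex.I_re, Complex.I_im, Complex.neg_re,
    Complex.neg_im]
  ring

end SingletAux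

namespace SingletAux
open Finset Complex

variable {n : ℕ} {m : Fin n → Fin n} {χ : Fin 2 → ℂ}

lemma Aop_eq (k : Fin n) :
    Aop (m k) (singletProduct m χ) = Aop k (singletProduct m χ) := by
  funext I
  simp only [Aop]
  rcases eq_or_ne (singletProduct m χ I) 0 with h | h
  · rw [h, mul_zero, mul_zero]
  · rw [← sp_support h k]

lemma Cop_eq (hinv : Function.Involutive m) {k : Fin n} (hk : m k ≠ k) :
    Cop (m k) (singletProduct m χ) = Cop k (singletProduct m χ) := by
  funext I
  simp only [Cop]
  rw [← sp_flip_eq hinv hk]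

lemma Bop_eq (hinv : Function.Involutive m) {k : Fin n} (hk : m k ≠ k) :
    Bop (m k) (singletProduct m χ) = -(Bop k (singletProduct m χ)) := by
  funext I
  simp only [Bop, Pi.neg_apply]
  rw [← sp_flip_eq hinv hk I]
  rcases eq_or_ne (singletProduct m χ (flipBit k I)) 0 with h | h
  · rw [h, mul_zero, mul_zero, neg_zero]
  · have e1 := sp_support h k
    rw [flipBit_same, flipBit_other hk] at e1
    rw [← e1]
    rcases fin2_cases (I k) with h2 | h2 <;> rw [h2] <;>
      simp only [fin2_one_sub_zero, fin2_one_sub_one, Fin.val_zero, Fin.val_one, pow_zero,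
        pow_one] <;> ring

lemma Aop_self_anti (hinv : Function.Involutive m) {k : Fin n} (hk : m k ≠ k)
    (I : Fin n → Fin 2) :
    Aop k (singletProduct m χ) (pairPerm m k I) = -(Aop k (singletProduct m χ) I) := by
  simp only [Aop]
  rw [sp_pairPerm hinv hk, pairPerm_val m hk I k, if_pos rfl]
  rcases fin2_cases (I k) with h | h <;> rw [h] <;>
    simp only [fin2_one_sub_zero, fin2_one_sub_one, Fin.val_zero, Fin.val_one, pow_zero,
      pow_one] <;> ring

lemma pairPerm_val_other {k l : Fin n} (hk : m k ≠ k) (h1 : l ≠ k) (h2 : l ≠ m k)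
    (I : Fin n → Fin 2) : pairPerm m k I l = I l := by
  rw [pairPerm_val m hk, if_neg h1, if_neg h2]

lemma flip_pairPerm_comm {k l : Fin n} (h1 : l ≠ k) (h2 : l ≠ m k) (I : Fin n → Fin 2) :
    flipBit l (pairPerm m k I) = pairPerm m k (flipBit l I) := by
  rw [pairPerm_apply, pairPerm_apply, flipBit_comm h1, flipBit_comm h2]

lemma Aop_other_inv (hinv : Function.Involutive m) {k l : Fin n} (hk : m k ≠ k)
    (h1 : l ≠ k) (h2 : l ≠ m k) (I : Fin n → Fin 2) :
    Aop l (singletProduct m χ) (pairPerm m k I) = Aop l (singletProduct m χ) I := by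
  simp only [Aop]
  rw [sp_pairPerm hinv hk, pairPerm_val_other hk h1 h2]

lemma Bop_other_inv (hinv : Function.Involutive m) {k l : Fin n} (hk : m k ≠ k)
    (h1 : l ≠ k) (h2 : l ≠ m k) (I : Fin n → Fin 2) :
    Bop l (singletProduct m χ) (pairPerm m k I) = Bop l (singletProduct m χ) I := by
  simp only [Bop]
  rw [pairPerm_val_other hk h1 h2, flip_pairPerm_comm h1 h2, sp_pairPerm hinv hk]

lemma Cop_other_inv (hinv : Function.Involutive m) {k l : Fin n} (hk : m k ≠ k)
    (h1 : l ≠ k) (h2 : l ≠ m k) (I : Fin n → Fin 2) :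
    Cop l (singletProduct m χ) (pairPerm m k I) = Cop l (singletProduct m χ) I := by
  simp only [Cop]
  rw [flip_pairPerm_comm h1 h2, sp_pairPerm hinv hk]

lemma D_inv (hinv : Function.Involutive m) {k : Fin n} (hk : m k ≠ k) (I : Fin n → Fin 2) :
    ((-Complex.I) • (singletProduct m χ)) (pairPerm m k I)
      = ((-Complex.I) • (singletProduct m χ)) I := by
  simp only [Pi.smul_apply, smul_eq_mul]
  rw [sp_pairPerm hinv hk]

/-- cross orthogonality: `A` at a paired qubit against any `pairPerm`-invariant function -/
lemma rdot_A_inv (hinv : Function.Involutive m) {k : Fin n} (hk : m k ≠ k)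
    (g : QState n) (hg : ∀ I, g (pairPerm m k I) = g I) :
    rdot (Aop k (singletProduct m χ)) g = 0 := by
  unfold rdot
  apply sum_eq_zero_of_anti (pairPerm m k)
  intro I
  have : (pairPerm m k) I = pairPerm m k I := rfl
  rw [this, Aop_self_anti hinv hk, hg, map_neg, neg_mul, Complex.neg_re]

/-- termwise-zero: a `flipBit k`-type column at a paired qubit against a column whose
argument agrees with `I` on the pair -/
lemma term_zero {k : Fin n} (hk : m k ≠ k) (c d : ℂ) {I J : Fin n → Fin 2}
    (h1 : J k = I k) (h2 : J (m k) = I (m k)) :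
    ((starRingEnd ℂ) (c * singletProduct m χ (flipBit k I))
      * (d * singletProduct m χ J)).re = 0 := by
  rcases mul_eq_zero.mp (sp_mul_flip_eq_zero hk h1 h2) with h | h <;> rw [h] <;> simp

end SingletAux

def opv {n : ℕ} (a : Fin 3) (k : Fin n) (ψ : QState n) : QState n :=
  if a = 0 then Aop k ψ else if a = 1 then Bop k ψ else Cop k ψ

namespace SingletAux
open Finset Complex

variable {n : ℕ} {m : Fin n → Fin n} {χ : Fin 2 → ℂ}

lemma fin3_cases (a : Fin 3) : a = 0 ∨ a = 1 ∨ a = 2 := by revert a; decide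

@[simp] lemma opv_zero (k : Fin n) (ψ : QState n) : opv 0 k ψ = Aop k ψ := rfl
@[simp] lemma opv_one (k : Fin n) (ψ : QState n) : opv 1 k ψ = Bop k ψ := rfl
@[simp] lemma opv_two (k : Fin n) (ψ : QState n) : opv 2 k ψ = Cop k ψ := rfl

lemma opv_other_inv (hinv : Function.Involutive m) {k l : Fin n} (hk : m k ≠ k)
    (h1 : l ≠ k) (h2 : l ≠ m k) (b : Fin 3) (I : Fin n → Fin 2) :
    opv b l (singletProduct m χ) (pairPerm m k I) = opv b l (singletProduct m χ) I := by
  rcases fin3_cases b with hb | hb | hb <;> subst hb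
  · exact Aop_other_inv hinv hk h1 h2 I
  · exact Bop_other_inv hinv hk h1 h2 I
  · exact Cop_other_inv hinv hk h1 h2 I

lemma rdot_flipcol_opv {k l : Fin n} (hk : m k ≠ k) (hl1 : l ≠ k) (hl2 : l ≠ m k)
    (c : (Fin n → Fin 2) → ℂ) (b : Fin 3) :
    rdot (fun I => c I * singletProduct m χ (flipBit k I)) (opv b l (singletProduct m χ)) = 0 := by
  unfold rdot
  apply Finset.sum_eq_zero
  intro I _
  rcases fin3_cases b with hb | hb | hb <;> subst hb
  · exact term_zero hk (c I) (Complex.I * (-1) ^ ((I l : ℕ))) rfl rfl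
  · simp only [opv_one, Bop]
    exact term_zero hk (c I) ((-1) ^ ((I l : ℕ)))
      (flipBit_other (Ne.symm hl1) I) (flipBit_other (Ne.symm hl2) I)
  · simp only [opv_two, Cop]
    exact term_zero hk (c I) Complex.I
      (flipBit_other (Ne.symm hl1) I) (flipBit_other (Ne.symm hl2) I)

lemma ortho_cross (hinv : Function.Involutive m) {k l : Fin n} (a b : Fin 3) (hkl : k ≠ l)
    (hklm : l ≠ m k) (hlkm : k ≠ m l) (hpair : m k ≠ k ∨ m l ≠ l) :
    rdot (opv a k (singletProduct m χ)) (opv b l (singletProduct m χ)) = 0 := by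
  have main : ∀ (k l : Fin n) (a b : Fin 3), m k ≠ k → k ≠ l → l ≠ m k →
      rdot (opv a k (singletProduct m χ)) (opv b l (singletProduct m χ)) = 0 := by
    intro k l a b hk hkl hklm
    rcases fin3_cases a with ha | ha | ha <;> subst ha
    · exact rdot_A_inv hinv hk _ (opv_other_inv hinv hk (Ne.symm hkl) hklm b)
    · exact rdot_flipcol_opv hk (Ne.symm hkl) hklm (fun I => (-1 : ℂ) ^ ((I k : ℕ))) b
    · exact rdot_flipcol_opv hk (Ne.symm hkl) hklm (fun _ => Complex.I) b
  rcases hpair with hk | hl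
  · exact main k l a b hk hkl hklm
  · rw [rdot_comm]
    exact main l k b a hl (Ne.symm hkl) hlkm

lemma ortho_D (hinv : Function.Involutive m) {k : Fin n} (hk : m k ≠ k) (a : Fin 3) :
    rdot (opv a k (singletProduct m χ)) ((-Complex.I) • (singletProduct m χ)) = 0 := by
  rcases fin3_cases a with ha | ha | ha <;> subst ha
  · exact rdot_A_inv hinv hk _ (D_inv hinv hk)
  · unfold rdot
    apply Finset.sum_eq_zero
    intro I _
    simp only [opv_one, Bop, Pi.smul_apply, smul_eq_mul]
    exact term_zero hk ((-1) ^ ((I k : ℕ))) (-Complex.I) rfl rfl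
  · unfold rdot
    apply Finset.sum_eq_zero
    intro I _
    simp only [opv_two, Cop, Pi.smul_apply, smul_eq_mul]
    exact term_zero hk Complex.I (-Complex.I) rfl rfl

lemma ortho_same (ψ : QState n) (k : Fin n) {a b : Fin 3} (hab : a ≠ b) :
    rdot (opv a k ψ) (opv b k ψ) = 0 := by
  rcases fin3_cases a with ha | ha | ha <;> rcases fin3_cases b with hb | hb | hb <;>
    subst ha <;> subst hb <;> first
    | exact absurd rfl hab
    | exact rdot_AB ψ k
    | exact rdot_AC ψ k
    | exact rdot_BC ψ k
    | (rw [rdot_comm]; first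
        | exact rdot_AB ψ k
        | exact rdot_AC ψ k
        | exact rdot_BC ψ k)

lemma opv_diag (ψ : QState n) (k : Fin n) (a : Fin 3) :
    rdot (opv a k ψ) (opv a k ψ) = rdot ψ ψ := by
  rcases fin3_cases a with ha | ha | ha <;> subst ha
  · exact rdot_AA ψ k
  · exact rdot_BB ψ k
  · exact rdot_CC ψ k

lemma conj_mul_self_re (z : ℂ) : ((starRingEnd ℂ) z * z).re = Complex.normSq z := by
  simp [Complex.mul_re, Complex.normSq_apply]

lemma rdot_sp_pos (hχ : χ ≠ 0) : 0 < rdot (singletProduct m χ) (singletProduct m χ) := by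
  obtain ⟨j, hj⟩ := Function.ne_iff.mp hχ
  have h0 : singletProduct m χ (fun _ => j) ≠ 0 := by
    unfold singletProduct
    rw [Finset.prod_congr rfl (fun k _ => if_pos rfl), Finset.prod_const_one, one_mul,
      Finset.prod_const]
    exact pow_ne_zero _ hj
  have hr : rdot (singletProduct m χ) (singletProduct m χ)
      = ∑ I : Fin n → Fin 2, Complex.normSq (singletProduct m χ I) := by
    unfold rdot
    exact Finset.sum_congr rfl fun I _ => conj_mul_self_re _
  rw [hr]
  calc (0 : ℝ) < Complex.normSq (singletProduct m χ (fun _ => j)) :=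
        Complex.normSq_pos.mpr h0
    _ ≤ _ := Finset.single_le_sum (fun i _ => Complex.normSq_nonneg _) (Finset.mem_univ _)

end SingletAux
namespace SingletAux
open Finset Complex

variable {n : ℕ} {m : Fin n → Fin n} {χ : Fin 2 → ℂ}

lemma bloch_scalar0 (a b : ℂ) (hs : Complex.normSq a + Complex.normSq b ≠ 0) :
    (↑(-((Complex.normSq a - Complex.normSq b) / (Complex.normSq a + Complex.normSq b))) : ℂ)
        * (Complex.I * a)
      + (↑(-(2 * (((starRingEnd ℂ) a * b).im) / (Complex.normSq a + Complex.normSq b))) : ℂ) * b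
      + (↑(-(2 * (((starRingEnd ℂ) a * b).re) / (Complex.normSq a + Complex.normSq b))) : ℂ)
        * (Complex.I * b)
      = -(Complex.I * a) := by
  have hs' : a.re ^ 2 + a.im ^ 2 + (b.re ^ 2 + b.im ^ 2) ≠ 0 := by
    simpa [Complex.normSq_apply, sq] using hs
  rw [Complex.ext_iff]
  constructor <;>
    simp only [Complex.add_re, Complex.add_im, Complex.mul_re, Complex.mul_im,
      Complex.ofReal_re, Complex.ofReal_im, Complex.I_re, Complex.I_im, Complex.neg_re,
      Complex.neg_im, Complex.conj_re, Complex.conj_im, Complex.normSq_apply] <;>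
    field_simp <;> ring

lemma bloch_scalar1 (a b : ℂ) (hs : Complex.normSq a + Complex.normSq b ≠ 0) :
    (↑(-((Complex.normSq a - Complex.normSq b) / (Complex.normSq a + Complex.normSq b))) : ℂ)
        * (Complex.I * (-1) * b)
      + (↑(-(2 * (((starRingEnd ℂ) a * b).im) / (Complex.normSq a + Complex.normSq b))) : ℂ)
        * ((-1) * a)
      + (↑(-(2 * (((starRingEnd ℂ) a * b).re) / (Complex.normSq a + Complex.normSq b))) : ℂ)
        * (Complex.I * a)
      = -(Complex.I * b) := by
  have hs' : a.re ^ 2 + a.im ^ 2 + (b.re ^ 2 + b.im ^ 2) ≠ 0 := by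
    simpa [Complex.normSq_apply, sq] using hs
  rw [Complex.ext_iff]
  constructor <;>
    simp only [Complex.add_re, Complex.add_im, Complex.mul_re, Complex.mul_im,
      Complex.ofReal_re, Complex.ofReal_im, Complex.I_re, Complex.I_im, Complex.neg_re,
      Complex.neg_im, Complex.one_re, Complex.one_im, Complex.conj_re, Complex.conj_im,
      Complex.normSq_apply] <;>
    field_simp <;> ring

lemma sp_decomp {k0 : Fin n} (hF : Finset.univ.filter (fun k => m k = k) = {k0})
    (I : Fin n → Fin 2) :
    singletProduct m χ I = (∏ k : Fin n, if I k = I (m k) then (1 : ℂ) else 0) * χ (I k0) := by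
  unfold singletProduct
  rw [hF, Finset.prod_singleton]

lemma P_flip (hinv : Function.Involutive m) {k0 : Fin n}
    (hF : Finset.univ.filter (fun k => m k = k) = {k0}) (I : Fin n → Fin 2) :
    (∏ k : Fin n, if flipBit k0 I k = flipBit k0 I (m k) then (1 : ℂ) else 0)
      = ∏ k : Fin n, if I k = I (m k) then (1 : ℂ) else 0 := by
  have hk0 : m k0 = k0 := by
    have : k0 ∈ Finset.univ.filter (fun k => m k = k) := by rw [hF]; exact Finset.mem_singleton_self k0
    exact (Finset.mem_filter.mp this).2
  refine Finset.prod_congr rfl fun j _ => ?_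
  by_cases hj : j = k0
  · subst hj; rw [hk0, if_pos rfl, if_pos rfl]
  · have hmj : m j ≠ k0 := by
      intro h
      exact hj (by have := congrArg m h; rwa [hinv j, hk0] at this)
    rw [flipBit_other hj, flipBit_other hmj]

lemma sp_flip_decomp (hinv : Function.Involutive m) {k0 : Fin n}
    (hF : Finset.univ.filter (fun k => m k = k) = {k0}) (I : Fin n → Fin 2) :
    singletProduct m χ (flipBit k0 I)
      = (∏ k : Fin n, if I k = I (m k) then (1 : ℂ) else 0) * χ (1 - I k0) := by
  rw [sp_decomp hF, P_flip hinv hF, flipBit_same]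

lemma bloch (hinv : Function.Involutive m) {k0 : Fin n}
    (hF : Finset.univ.filter (fun k => m k = k) = {k0}) (hχ : χ ≠ 0) :
    (-Complex.I) • (singletProduct m χ)
      = (-((Complex.normSq (χ 0) - Complex.normSq (χ 1))
            / (Complex.normSq (χ 0) + Complex.normSq (χ 1)))) • Aop k0 (singletProduct m χ)
      + (-(2 * (((starRingEnd ℂ) (χ 0) * χ 1).im)
            / (Complex.normSq (χ 0) + Complex.normSq (χ 1)))) • Bop k0 (singletProduct m χ)
      + (-(2 * (((starRingEnd ℂ) (χ 0) * χ 1).re)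
            / (Complex.normSq (χ 0) + Complex.normSq (χ 1)))) • Cop k0 (singletProduct m χ) := by
  have hs : Complex.normSq (χ 0) + Complex.normSq (χ 1) ≠ 0 := by
    obtain ⟨j, hj⟩ := Function.ne_iff.mp hχ
    have : 0 < Complex.normSq (χ 0) + Complex.normSq (χ 1) := by
      rcases fin2_cases j with h | h <;> subst h
      · exact add_pos_of_pos_of_nonneg (Complex.normSq_pos.mpr hj) (Complex.normSq_nonneg _)
      · exact add_pos_of_nonneg_of_pos (Complex.normSq_nonneg _) (Complex.normSq_pos.mpr hj)
    exact ne_of_gt this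
  funext I
  simp only [Pi.add_apply, Pi.smul_apply, smul_eq_mul, Complex.real_smul, Aop, Bop, Cop]
  rw [sp_decomp hF I, sp_flip_decomp hinv hF I]
  rcases fin2_cases (I k0) with h | h <;> rw [h] <;>
    simp only [fin2_one_sub_zero, fin2_one_sub_one, Fin.val_zero, Fin.val_one, pow_zero,
      pow_one, mul_one]
  · linear_combination (-(∏ k : Fin n, if I k = I (m k) then (1 : ℂ) else 0))
      * bloch_scalar0 (χ 0) (χ 1) hs
  · linear_combination (-(∏ k : Fin n, if I k = I (m k) then (1 : ℂ) else 0))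
      * bloch_scalar1 (χ 0) (χ 1) hs

end SingletAux
def Rset {n : ℕ} (m : Fin n → Fin n) : Finset (Fin n) :=
  Finset.univ.filter (fun k => m k = k ∨ k < m k)

def famO {n : ℕ} (m : Fin n → Fin n) (χ : Fin 2 → ℂ) :
    {x // x ∈ Rset m} × Fin 3 → QState n :=
  fun p => opv p.2 p.1.1 (singletProduct m χ)

namespace SingletAux
open Finset Complex

variable {n : ℕ} {m : Fin n → Fin n} {χ : Fin 2 → ℂ}

lemma mem_Rset {k : Fin n} : k ∈ Rset m ↔ (m k = k ∨ k < m k) := by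
  simp [Rset]

lemma not_mem_Rset (hinv : Function.Involutive m) {k : Fin n} (h : k ∉ Rset m) :
    m k ∈ Rset m ∧ m k ≠ k := by
  rw [mem_Rset] at h
  push_neg at h
  obtain ⟨h1, h2⟩ := h
  have hlt : m k < k := lt_of_le_of_ne h2 h1
  refine ⟨mem_Rset.mpr (Or.inr ?_), ne_of_lt hlt⟩
  rw [hinv k]
  exact hlt

lemma Rset_ne (hinv : Function.Involutive m) {k l : Fin n} (hk : k ∈ Rset m)
    (hl : l ∈ Rset m) (hne : k ≠ l) : l ≠ m k := by
  intro h
  rcases mem_Rset.mp hk with h1 | h1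
  · exact hne (by rw [← h1, ← h])
  · rcases mem_Rset.mp hl with h2 | h2
    · apply hne
      rw [h] at h2
      rw [hinv k] at h2
      rw [h, ← h2]
    · rw [h] at h2
      rw [hinv k] at h2
      exact absurd h2 (lt_asymm h1)

lemma card_lt_eq (hinv : Function.Involutive m) :
    (Finset.univ.filter (fun k => k < m k)).card
      = (Finset.univ.filter (fun k => m k < k)).card := by
  apply Finset.card_bij (fun k _ => m k)
  · intro a ha
    rw [Finset.mem_filter] at ha ⊢
    exact ⟨Finset.mem_univ _, by rw [hinv a]; exact ha.2⟩
  · intro a _ b _ h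
    have := congrArg m h
    rwa [hinv a, hinv b] at this
  · intro b hb
    rw [Finset.mem_filter] at hb
    exact ⟨m b, Finset.mem_filter.mpr ⟨Finset.mem_univ _, by rw [hinv b]; exact hb.2⟩, hinv b⟩

lemma n_partition (hinv : Function.Involutive m) :
    n = (Finset.univ.filter (fun k => m k = k)).card
      + 2 * (Finset.univ.filter (fun k => k < m k)).card := by
  have h1 := Finset.card_filter_add_card_filter_not
    (s := (Finset.univ : Finset (Fin n))) (p := fun k => m k = k)
  have h2 : Finset.univ.filter (fun k => ¬ m k = k)
      = Finset.univ.filter (fun k => k < m k) ∪ Finset.univ.filter (fun k => m k < k) := by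
    ext k
    simp only [Finset.mem_filter, Finset.mem_union, Finset.mem_univ, true_and]
    constructor
    · intro h; exact Ne.lt_or_gt (Ne.symm h)
    · rintro (h | h) <;> intro he <;> rw [he] at h <;> exact lt_irrefl _ h
  have h3 : (Finset.univ.filter (fun k => k < m k) ∪
      Finset.univ.filter (fun k => m k < k)).card
      = (Finset.univ.filter (fun k => k < m k)).card
        + (Finset.univ.filter (fun k => m k < k)).card := by
    apply Finset.card_union_of_disjoint
    rw [Finset.disjoint_filter]
    intro k _ h1' h2'
    exact lt_asymm h1' h2'
  have h4 := card_lt_eq hinv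
  have h5 : (Finset.univ : Finset (Fin n)).card = n := by simp
  rw [h2, h3] at h1
  omega

lemma Rset_card (hinv : Function.Involutive m) :
    (Rset m).card = (Finset.univ.filter (fun k => m k = k)).card
      + (Finset.univ.filter (fun k => k < m k)).card := by
  have : Rset m = Finset.univ.filter (fun k => m k = k)
      ∪ Finset.univ.filter (fun k => k < m k) := by
    rw [Rset, Finset.filter_or]
  rw [this]
  apply Finset.card_union_of_disjoint
  rw [Finset.disjoint_filter]
  intro k _ h1 h2
  rw [h1] at h2
  exact lt_irrefl _ h2

end SingletAux
namespace SingletAux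
open Finset Complex

variable {n : ℕ} {m : Fin n → Fin n} {χ : Fin 2 → ℂ}

lemma Aop_mem_span (hinv : Function.Involutive m) (k : Fin n) :
    Aop k (singletProduct m χ) ∈ Submodule.span ℝ (Set.range (famO m χ)) := by
  by_cases hk : k ∈ Rset m
  · exact Submodule.subset_span ⟨(⟨k, hk⟩, 0), rfl⟩
  · obtain ⟨hmk, hne⟩ := not_mem_Rset hinv hk
    rw [← Aop_eq k]
    exact Submodule.subset_span ⟨(⟨m k, hmk⟩, 0), rfl⟩

lemma Bop_mem_span (hinv : Function.Involutive m) (k : Fin n) :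
    Bop k (singletProduct m χ) ∈ Submodule.span ℝ (Set.range (famO m χ)) := by
  by_cases hk : k ∈ Rset m
  · exact Submodule.subset_span ⟨(⟨k, hk⟩, 1), rfl⟩
  · obtain ⟨hmk, hne⟩ := not_mem_Rset hinv hk
    have hB : Bop k (singletProduct m χ) = -(Bop (m k) (singletProduct m χ)) := by
      rw [Bop_eq hinv hne, neg_neg]
    rw [hB]
    exact neg_mem (Submodule.subset_span ⟨(⟨m k, hmk⟩, 1), rfl⟩)

lemma Cop_mem_span (hinv : Function.Involutive m) (k : Fin n) :
    Cop k (singletProduct m χ) ∈ Submodule.span ℝ (Set.range (famO m χ)) := by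
  by_cases hk : k ∈ Rset m
  · exact Submodule.subset_span ⟨(⟨k, hk⟩, 2), rfl⟩
  · obtain ⟨hmk, hne⟩ := not_mem_Rset hinv hk
    rw [← Cop_eq hinv hne]
    exact Submodule.subset_span ⟨(⟨m k, hmk⟩, 2), rfl⟩

lemma opv_mem_triple (a : Fin 3) (k : Fin n) (ψ : QState n) : opv a k ψ ∈ triple k ψ := by
  rcases fin3_cases a with ha | ha | ha <;> subst ha <;> simp [triple, opv]

lemma famO_mem_columns (p : {x // x ∈ Rset m} × Fin 3) :
    famO m χ p ∈ columns (singletProduct m χ) := by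
  apply Set.mem_union_left
  exact Set.mem_iUnion.mpr ⟨p.1.1, opv_mem_triple p.2 p.1.1 _⟩

lemma ortho_famO (hinv : Function.Involutive m)
    (hpp : ∀ k l : Fin n, k ∈ Rset m → l ∈ Rset m → k ≠ l → (m k ≠ k ∨ m l ≠ l)) :
    ∀ i j, i ≠ j → rdot (famO m χ i) (famO m χ j) = 0 := by
  rintro ⟨⟨k, hk⟩, a⟩ ⟨⟨l, hl⟩, b⟩ hij
  by_cases hkl : k = l
  · subst hkl
    by_cases hab : a = b
    · subst hab; exact absurd rfl hij
    · exact ortho_same _ k hab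
  · exact ortho_cross hinv a b hkl (Rset_ne hinv hk hl hkl)
      (Rset_ne hinv hl hk (Ne.symm hkl)) (hpp k l hk hl hkl)

lemma diag_famO (hχ : χ ≠ 0) (i : {x // x ∈ Rset m} × Fin 3) :
    rdot (famO m χ i) (famO m χ i) ≠ 0 := by
  obtain ⟨⟨k, hk⟩, a⟩ := i
  show rdot (opv a k _) (opv a k _) ≠ 0
  rw [opv_diag]
  exact (rdot_sp_pos hχ).ne'

end SingletAux
namespace SingletAux
open Finset Complex

variable {n : ℕ} {m : Fin n → Fin n} {χ : Fin 2 → ℂ}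

lemma span_eq_even (hinv : Function.Involutive m) :
    Submodule.span ℝ (columns (singletProduct m χ)) =
      Submodule.span ℝ (Set.range (Sum.elim (famO m χ)
        (fun _ : Unit => (-Complex.I) • singletProduct m χ))) := by
  apply le_antisymm
  · rw [Submodule.span_le]
    intro x hx
    have hsub : Set.range (famO m χ) ⊆ Set.range (Sum.elim (famO m χ)
        (fun _ : Unit => (-Complex.I) • singletProduct m χ)) := by
      rintro _ ⟨p, rfl⟩; exact ⟨Sum.inl p, rfl⟩
    rcases hx with hx | hx
    · rw [Set.mem_iUnion] at hx
      obtain ⟨k, hk⟩ := hx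
      simp only [triple, Set.mem_insert_iff, Set.mem_singleton_iff] at hk
      rcases hk with rfl | rfl | rfl
      · exact Submodule.span_mono hsub (Aop_mem_span hinv k)
      · exact Submodule.span_mono hsub (Bop_mem_span hinv k)
      · exact Submodule.span_mono hsub (Cop_mem_span hinv k)
    · rw [Set.mem_singleton_iff] at hx
      subst hx
      exact Submodule.subset_span ⟨Sum.inr (), rfl⟩
  · rw [Submodule.span_le]
    rintro x ⟨p | u, rfl⟩
    · exact Submodule.subset_span (famO_mem_columns p)
    · exact Submodule.subset_span (Set.mem_union_right _ rfl)

lemma span_eq_odd (hinv : Function.Involutive m) {k0 : Fin n}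
    (hF : Finset.univ.filter (fun k => m k = k) = {k0}) (hχ : χ ≠ 0) :
    Submodule.span ℝ (columns (singletProduct m χ)) =
      Submodule.span ℝ (Set.range (famO m χ)) := by
  have hk0fix : m k0 = k0 := by
    have hmem : k0 ∈ Finset.univ.filter (fun k => m k = k) := by
      rw [hF]; exact Finset.mem_singleton_self k0
    exact (Finset.mem_filter.mp hmem).2
  have hk0 : k0 ∈ Rset m := mem_Rset.mpr (Or.inl hk0fix)
  apply le_antisymm
  · rw [Submodule.span_le]
    intro x hx
    rcases hx with hx | hx
    · rw [Set.mem_iUnion] at hx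
      obtain ⟨k, hk⟩ := hx
      simp only [triple, Set.mem_insert_iff, Set.mem_singleton_iff] at hk
      rcases hk with rfl | rfl | rfl
      · exact Aop_mem_span hinv k
      · exact Bop_mem_span hinv k
      · exact Cop_mem_span hinv k
    · rw [Set.mem_singleton_iff] at hx
      subst hx
      rw [bloch hinv hF hχ]
      exact add_mem (add_mem
        (Submodule.smul_mem _ _ (Submodule.subset_span ⟨(⟨k0, hk0⟩, 0), rfl⟩))
        (Submodule.smul_mem _ _ (Submodule.subset_span ⟨(⟨k0, hk0⟩, 1), rfl⟩)))
        (Submodule.smul_mem _ _ (Submodule.subset_span ⟨(⟨k0, hk0⟩, 2), rfl⟩))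
  · rw [Submodule.span_le]
    rintro x ⟨p, rfl⟩
    exact Submodule.subset_span (famO_mem_columns p)

end SingletAux


open SingletAux Finset

/-- A singlet product (with a nonzero single-qubit vector in the
leftover qubit when `n` is odd) attains the minimum rank: `rank M = 3n/2 + 1` for
`n` even and `rank M = (3n+1)/2 + 1` for `n` odd. -/
theorem singlet_product_min_rank {n : ℕ} (hn : 2 ≤ n) (m : Fin n → Fin n)
    (hm : IsMatching m) (χ : Fin 2 → ℂ) (hχ : χ ≠ 0) :
    rankM (singletProduct m χ) = minRank n := by
  obtain ⟨hinv, hcard⟩ := hm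
  by_cases heven : Even n
  · have h0 : (Finset.univ.filter fun k => m k = k).card = 0 := by
      rw [hcard, Nat.even_iff.mp heven]
    have hnofix : ∀ k : Fin n, m k ≠ k := by
      intro k hfix
      have hmem : k ∈ Finset.univ.filter (fun k => m k = k) :=
        Finset.mem_filter.mpr ⟨Finset.mem_univ _, hfix⟩
      rw [Finset.card_eq_zero.mp h0] at hmem
      exact absurd hmem (Finset.notMem_empty k)
    have hli : LinearIndependent ℝ (Sum.elim (famO m χ)
        (fun _ : Unit => (-Complex.I) • singletProduct m χ)) := by
      apply li_of_ortho
      · rintro (⟨⟨k, hk⟩, a⟩ | u)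
        · exact diag_famO hχ _
        · show rdot ((-Complex.I) • _) ((-Complex.I) • _) ≠ 0
          rw [rdot_DD]
          exact (rdot_sp_pos hχ).ne'
      · rintro (p | u) (q | u') hij
        · exact ortho_famO hinv (fun k l _ _ _ => Or.inl (hnofix k)) p q
            (fun h => hij (by rw [h]))
        · obtain ⟨⟨k, hk⟩, a⟩ := p
          exact ortho_D hinv (hnofix k) a
        · obtain ⟨⟨k, hk⟩, a⟩ := q
          show rdot _ (opv a k _) = 0
          rw [rdot_comm]
          exact ortho_D hinv (hnofix k) a
        · exact absurd rfl hij
    unfold rankM rdim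
    rw [span_eq_even hinv, finrank_span_eq_card hli]
    have hc1 := n_partition hinv
    have hc2 := Rset_card hinv
    rw [h0] at hc1 hc2
    have hcard3 : Fintype.card (({x // x ∈ Rset m} × Fin 3) ⊕ Unit)
        = (Rset m).card * 3 + 1 := by
      simp [Fintype.card_sum, Fintype.card_prod, Fintype.card_coe]
    rw [hcard3, minRank, if_pos heven]
    omega
  · have h1 : (Finset.univ.filter fun k => m k = k).card = 1 := by
      rw [hcard, Nat.not_even_iff.mp heven]
    obtain ⟨k0, hF⟩ := Finset.card_eq_one.mp h1
    have hpp : ∀ k l : Fin n, k ∈ Rset m → l ∈ Rset m → k ≠ l → (m k ≠ k ∨ m l ≠ l) := by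
      intro k l _ _ hkl
      by_contra h
      push_neg at h
      obtain ⟨h1', h2'⟩ := h
      apply hkl
      have e1 : k ∈ Finset.univ.filter (fun k => m k = k) :=
        Finset.mem_filter.mpr ⟨Finset.mem_univ _, h1'⟩
      have e2 : l ∈ Finset.univ.filter (fun k => m k = k) :=
        Finset.mem_filter.mpr ⟨Finset.mem_univ _, h2'⟩
      rw [hF, Finset.mem_singleton] at e1 e2
      rw [e1, e2]
    have hli := li_of_ortho (famO m χ) (diag_famO hχ) (ortho_famO hinv hpp)
    unfold rankM rdim
    rw [span_eq_odd hinv hF hχ, finrank_span_eq_card hli]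
    have hc1 := n_partition hinv
    have hc2 := Rset_card hinv
    rw [h1] at hc1 hc2
    have hcard3 : Fintype.card ({x // x ∈ Rset m} × Fin 3) = (Rset m).card * 3 := by
      simp [Fintype.card_prod, Fintype.card_coe]
    rw [hcard3, minRank, if_neg heven]
    omega
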